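/- Rule 1 (insertion/deletion of observations) equivalence of antecedents: for an aADMG G and disjoint subsets X, Y, Z, W of V, Y is separated from Z given X ∪ W in G_X̂ (the graph obtained from G by the intervention operation on X) if and only if Y is separated from Z given W in G with all directed edges into and out of X deleted. -/

import Mathlib

open scoped Classical
open MeasureTheory ProbabilityTheory

noncomputable section

/-- A mixed graph over a node set `V`, with directed (`dir`), undirected (`undir`)
and bidirected (`bidir`) edges. -/
structure MixedGraph (V : Type*) where
  dir : V → V → Prop
  undir : V → V → Prop
  bidir : V → V → Prop

namespace MixedGraph

variable {V : Type*}

/-- An ADMG: symmetric undirected/bidirected edges, no self loops, no directed cycles. -/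
def WellFormed (G : MixedGraph V) : Prop :=
  (∀ a b, G.undir a b → G.undir b a) ∧
  (∀ a b, G.bidir a b → G.bidir b a) ∧
  (∀ a, ¬ G.dir a a) ∧ (∀ a, ¬ G.undir a a) ∧ (∀ a, ¬ G.bidir a a) ∧
  (∀ a, ¬ Relation.TransGen G.dir a a)

/-- An aADMG has no bidirected edges. -/
def NoBidirected (G : MixedGraph V) : Prop := ∀ a b, ¬ G.bidir a b

/-- The kind of an edge traversed from left to right along a route. -/
inductive Step : Type
  | fwd | bwd | bi | un
deriving DecidableEq

/-- Validity of traversing from `x` to `y` by a step of the given kind. -/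
def StepValid (G : MixedGraph V) (x : V) : Step → V → Prop
  | Step.fwd, y => G.dir x y
  | Step.bwd, y => G.dir y x
  | Step.bi, y => G.bidir x y
  | Step.un, y => G.undir x y

/-- A route between `α` and `β`: a sequence of (not necessarily distinct) nodes
`nodes 0, …, nodes n` consecutively joined by edges. -/
structure Route (G : MixedGraph V) (α β : V) where
  n : ℕ
  npos : 0 < n
  nodes : ℕ → V
  steps : ℕ → Step
  first : nodes 0 = α
  last : nodes n = β
  valid : ∀ i, i < n → StepValid G (nodes i) (steps i) (nodes (i + 1))

/-- Arrowhead at the right end of a step. -/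
def headInto (s : Step) : Prop := s = Step.fwd ∨ s = Step.bi

/-- Arrowhead at the left end of a step. -/
def headOut (s : Step) : Prop := s = Step.bwd ∨ s = Step.bi

variable {G : MixedGraph V} {α β : V}

/-- The interior node at position `i` (with `0 < i < n`) is a collider:
an arrowhead into it on at least one side, and on each side either an
arrowhead into it or an undirected edge. -/
def Route.IsCollider (r : Route G α β) (i : ℕ) : Prop :=
  (headInto (r.steps (i - 1)) ∨ headOut (r.steps i)) ∧
  (headInto (r.steps (i - 1)) ∨ r.steps (i - 1) = Step.un) ∧
  (headOut (r.steps i) ∨ r.steps i = Step.un)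

/-- `a` is an ancestor of the set `Z` (or belongs to it). -/
def Anc (G : MixedGraph V) (Z : Set V) (a : V) : Prop :=
  ∃ z ∈ Z, Relation.ReflTransGen G.dir a z

/-- Path-based connection criterion given `Z`. -/
def Route.PathConnecting (r : Route G α β) (Z : Set V) : Prop :=
  ∀ i, 0 < i → i < r.n →
    (r.IsCollider i → Anc G Z (r.nodes i)) ∧
    (¬ r.IsCollider i →
      r.nodes i ∉ Z ∨
      (r.steps (i - 1) = Step.un ∧ r.steps i = Step.un ∧
        ((∃ p, G.dir p (r.nodes i) ∧ p ∉ Z) ∨ ∃ s, G.bidir s (r.nodes i))))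

/-- Route-based connection criterion given `Z`. -/
def Route.RouteConnecting (r : Route G α β) (Z : Set V) : Prop :=
  ∀ i, 0 < i → i < r.n →
    (r.IsCollider i → r.nodes i ∈ Z) ∧
    (¬ r.IsCollider i →
      r.nodes i ∉ Z ∨
      (r.steps (i - 1) = Step.un ∧ r.steps i = Step.un ∧ ∃ s, G.bidir s (r.nodes i)))

/-- A route is a path when its nodes are all distinct. -/
def Route.IsPath (r : Route G α β) : Prop :=
  ∀ i j, i ≤ r.n → j ≤ r.n → r.nodes i = r.nodes j → i = j

/-- A directed route from `α` to `β` (all edges directed towards `β`). -/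
def Route.AllFwd (r : Route G α β) : Prop := ∀ i, i < r.n → r.steps i = Step.fwd

/-- `X` is separated from `Y` given `Z`: no connecting path between them. -/
def Separated (G : MixedGraph V) (X Y Z : Set V) : Prop :=
  ∀ a ∈ X, ∀ b ∈ Y, ¬ ∃ r : Route G a b, r.IsPath ∧ r.PathConnecting Z

/-- There is an undirected path `a − v₁ − … − vₙ − b` with all `vᵢ ∈ S`, `n ≥ 1`. -/
def UndirThrough (G : MixedGraph V) (S : Set V) (a b : V) : Prop :=
  ∃ c d, c ∈ S ∧ d ∈ S ∧ G.undir a c ∧ G.undir d b ∧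
    Relation.ReflTransGen (fun x y => x ∈ S ∧ y ∈ S ∧ G.undir x y) c d

/-- The intervention of `X` on `G`: delete directed/bidirected edges into `X`,
add undirected shortcuts through `X`, delete undirected edges at `X`. -/
def intervene (G : MixedGraph V) (X : Set V) : MixedGraph V where
  dir a b := G.dir a b ∧ b ∉ X
  bidir a b := G.bidir a b ∧ a ∉ X ∧ b ∉ X
  undir a b := a ∉ X ∧ b ∉ X ∧ (G.undir a b ∨ UndirThrough G X a b)

/-- Adjacency by an edge of any type. -/
def Adjacent (G : MixedGraph V) (a b : V) : Prop :=
  G.dir a b ∨ G.dir b a ∨ G.undir a b ∨ G.undir b a ∨ G.bidir a b ∨ G.bidir b a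

/-- Delete all directed edges into and out of `X`. -/
def dropDirAt (G : MixedGraph V) (X : Set V) : MixedGraph V where
  dir a b := G.dir a b ∧ a ∉ X ∧ b ∉ X
  undir := G.undir
  bidir := G.bidir

/-- Induced subgraph on `W`. -/
def induce (G : MixedGraph V) (W : Set V) : MixedGraph V where
  dir a b := a ∈ W ∧ b ∈ W ∧ G.dir a b
  undir a b := a ∈ W ∧ b ∈ W ∧ G.undir a b
  bidir a b := a ∈ W ∧ b ∈ W ∧ G.bidir a b

/-- The marginal graph `G^X`: edges among `X`, with undirected edges added for
undirected paths through `Xᶜ`. -/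
def marginal (G : MixedGraph V) (X : Set V) : MixedGraph V where
  dir a b := a ∈ X ∧ b ∈ X ∧ G.dir a b
  bidir a b := a ∈ X ∧ b ∈ X ∧ G.bidir a b
  undir a b := a ∈ X ∧ b ∈ X ∧ (G.undir a b ∨ UndirThrough G Xᶜ a b)

/-- `W'` is an ancestral set. -/
def Ancestral (G : MixedGraph V) (W' : Set V) : Prop :=
  ∀ a b, G.dir a b → b ∈ W' → a ∈ W'

/-- `a` and `b` are joined by an undirected path lying within `W`. -/
def uconnIn (G : MixedGraph V) (W : Set V) (a b : V) : Prop :=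
  a ∈ W ∧ b ∈ W ∧ Relation.ReflTransGen (fun x y => x ∈ W ∧ y ∈ W ∧ G.undir x y) a b

/-- `𝒮` is the set of components of `W`: the equivalence classes of
undirected connectivity within the subgraph induced by `W`. -/
def IsComponents (G : MixedGraph V) (W : Set V) (𝒮 : Finset (Finset V)) : Prop :=
  (∀ S ∈ 𝒮, ∃ a ∈ W, ∀ b, b ∈ S ↔ uconnIn G W a b) ∧
  (∀ a ∈ W, ∃ S ∈ 𝒮, a ∈ S) ∧
  (∀ S ∈ 𝒮, ∀ T ∈ 𝒮, S ≠ T → Disjoint S T)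

/-- `L` is a topological order of `W` with respect to the directed part of `G`. -/
def TopOrder [DecidableEq V] (G : MixedGraph V) (W : Set V) (L : List V) : Prop :=
  L.Nodup ∧ (∀ v, v ∈ L ↔ v ∈ W) ∧
  ∀ a b, a ∈ W → b ∈ W → G.dir a b → L.idxOf a < L.idxOf b

/-- The predecessors of `a` in the order `L`. -/
def predSet [DecidableEq V] (L : List V) (a : V) : Set V :=
  {b | b ∈ L ∧ L.idxOf b < L.idxOf a}

/-- Ancestors of the set `Y` (including `Y`). -/
def AnSet (G : MixedGraph V) (Y : Set V) : Set V :=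
  {a | ∃ y ∈ Y, Relation.ReflTransGen G.dir a y}

/-- Descendants of `a` (including `a`). -/
def Desc (G : MixedGraph V) (a b : V) : Prop := Relation.ReflTransGen G.dir a b

/-- The magnification of an ADMG: `A ↔ B` becomes `A ← λ_{AB} → B`,
every `A` gets `ε_A → A`, and `A − B` becomes `ε_A − ε_B`.
Nodes: `Sum.inl a` original, `Sum.inr (Sum.inl a)` is `ε_a`,
`Sum.inr (Sum.inr p)` is `λ_p`. -/
def magnify (G : MixedGraph V) : MixedGraph (V ⊕ (V ⊕ Sym2 V)) where
  dir x y :=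
    match x, y with
    | Sum.inl a, Sum.inl b => G.dir a b
    | Sum.inr (Sum.inl a), Sum.inl b => a = b
    | Sum.inr (Sum.inr p), Sum.inl b => ∃ c, p = s(b, c) ∧ G.bidir b c
    | _, _ => False
  undir x y :=
    match x, y with
    | Sum.inr (Sum.inl a), Sum.inr (Sum.inl b) => G.undir a b
    | _, _ => False
  bidir _ _ := False

/-- Replacing each bidirected edge `A ↔ B` with `A ← λ_{AB} → B` only. -/
def magBi (G : MixedGraph V) : MixedGraph (V ⊕ Sym2 V) where
  dir x y :=
    match x, y with
    | Sum.inl a, Sum.inl b => G.dir a b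
    | Sum.inr p, Sum.inl b => ∃ c, p = s(b, c) ∧ G.bidir b c
    | _, _ => False
  undir x y :=
    match x, y with
    | Sum.inl a, Sum.inl b => G.undir a b
    | _, _ => False
  bidir _ _ := False

/-- The back-door criterion of the set `S` relative to `(Xs, Ys)`:
`S` contains no descendant of `Xs` and blocks every non-directed path
from `Xs` to `Ys`. -/
def BackDoor (G : MixedGraph V) (S Xs Ys : Set V) : Prop :=
  (∀ a ∈ Xs, ∀ v ∈ S, ¬ Desc G a v) ∧
  (∀ a ∈ Xs, ∀ b ∈ Ys, ∀ r : Route G a b, r.IsPath → ¬ r.AllFwd →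
    ¬ r.PathConnecting S)

section SEM

variable [Fintype V]

/-- Integral over assignments of real values to the coordinates in `S`. -/
def intOver (S : Set V) (g : ((↥S) → ℝ) → ℝ) : ℝ :=
  letI : Fintype ↥S := Fintype.ofFinite _
  ∫ z : (↥S) → ℝ, g z

/-- Marginal density over the coordinates in `S`: integrate out `Sᶜ`. -/
def marg (p : (V → ℝ) → ℝ) (S : Set V) (x : V → ℝ) : ℝ :=
  intOver (Sᶜ) (fun y => p (fun v => if h : v ∈ Sᶜ then y ⟨v, h⟩ else x v))

/-- Override the assignment `x` on `S` by `z`. -/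
def ovr (x : V → ℝ) (S : Set V) (z : (↥S) → ℝ) : V → ℝ :=
  fun v => if h : v ∈ S then z ⟨v, h⟩ else x v

/-- Multivariate Gaussian density with mean 0 and precision matrix `Sinv`. -/
def gaussDensity (Sinv : Matrix V V ℝ) (u : V → ℝ) : ℝ :=
  Real.sqrt (Sinv.det / (2 * Real.pi) ^ (Fintype.card V)) *
    Real.exp (-(∑ i, ∑ j, u i * Sinv i j * u j) / 2)

/-- A causal model of an aADMG `G`: structural equations `A = f_A(Pa(A)) + ε_A`
with jointly Gaussian errors whose precision matrix has zeros for missing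
undirected edges. -/
structure GaussSEM (G : MixedGraph V) where
  f : V → (V → ℝ) → ℝ
  f_parents : ∀ A x y, (∀ B, G.dir B A → x B = y B) → f A x = f A y
  Sinv : Matrix V V ℝ
  symm : Sinv.IsSymm
  posdef : Sinv.PosDef
  zeros : ∀ A B, A ≠ B → ¬ G.undir A B → Sinv A B = 0

namespace GaussSEM

variable {G : MixedGraph V} (M : GaussSEM G)

/-- Error density. -/
def q : (V → ℝ) → ℝ := gaussDensity M.Sinv

/-- Error values recovered from an assignment. -/
def errs (x : V → ℝ) : V → ℝ := fun i => x i - M.f i x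

/-- Observational joint density over `V`. -/
def obs (x : V → ℝ) : ℝ := M.q (M.errs x)

/-- Observational conditional density `p(A | B)`. -/
def cond (A B : Set V) (x : V → ℝ) : ℝ :=
  marg M.obs (A ∪ B) x / marg M.obs B x

/-- Post-interventional density of `V \ Xset` under `do(Xset := x on Xset)`:
the errors of the intervened variables are marginalized out. -/
def doDensity (Xset : Set V) (x : V → ℝ) : ℝ :=
  marg M.q (Xsetᶜ) (M.errs x)

/-- Post-interventional conditional density `p(A | do(Xset), B)`. -/
def doCond (Xset A B : Set V) (x : V → ℝ) : ℝ :=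
  marg (M.doDensity Xset) (Xset ∪ A ∪ B) x / marg (M.doDensity Xset) (Xset ∪ B) x

/-- Conditional density of the errors in `A` given the errors in `B`. -/
def qcond (A B : Set V) (u : V → ℝ) : ℝ :=
  marg M.q (A ∪ B) u / marg M.q B u

/-- The factor `Q(S | W')`: conditional density of the errors of `S` given the
errors of `W'`, evaluated at the errors recovered from the assignment. -/
def QFactor (S W' : Set V) (x : V → ℝ) : ℝ := M.qcond S W' (M.errs x)

end GaussSEM

/-- A causal effect (a functional of the model) is identifiable when it is a
fixed functional of the observational density, uniformly over all models of `G`. -/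
def Identifiable (G : MixedGraph V) (eff : GaussSEM G → (V → ℝ) → ℝ) : Prop :=
  ∃ F : ((V → ℝ) → ℝ) → (V → ℝ) → ℝ, ∀ M : GaussSEM G, eff M = F M.obs

end SEM

end MixedGraph

/-!
A node of `X` on a route of `G.dropDirAt X` has no directed edges, so it is an undirected
non-collider, and it lies outside `W`: it never blocks. A path of `G.dropDirAt X` between nodes
outside `X` therefore meets `X` only in undirected runs, and each run together with its two
neighbours is exactly a shortcut edge of `G.intervene X`; collapsing the runs turns a path open
given `W` into one open given `X ∪ W`. Conversely, a path of `G.intervene X` open given `X ∪ W`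
avoids `X`, and expanding its shortcuts yields a walk of `G.dropDirAt X` open given `W` whose only
repeated nodes lie in `X`; cutting out the loops at those nodes leaves a path.
-/

namespace MixedGraph

variable {V : Type*}

def IsColliderAt (sl sr : Step) : Prop :=
  (headInto sl ∨ headOut sr) ∧ (headInto sl ∨ sl = Step.un) ∧ (headOut sr ∨ sr = Step.un)

def Unblocked (G : MixedGraph V) (Z : Set V) (sl sr : Step) (v : V) : Prop :=
  (IsColliderAt sl sr → Anc G Z v) ∧
  (¬ IsColliderAt sl sr → v ∉ Z ∨
    (sl = Step.un ∧ sr = Step.un ∧ ((∃ p, G.dir p v ∧ p ∉ Z) ∨ ∃ s, G.bidir s v)))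

theorem unblocked_un_un {G : MixedGraph V} {Z : Set V} {v : V} (hv : v ∉ Z) :
    Unblocked G Z Step.un Step.un v :=
  ⟨fun h => by simp [IsColliderAt, headInto, headOut] at h, fun _ => Or.inl hv⟩

namespace Route

variable {G : MixedGraph V} {a b c : V}

theorem pathConnecting_iff (r : Route G a b) (Z : Set V) :
    r.PathConnecting Z ↔
      ∀ i, 0 < i → i < r.n → Unblocked G Z (r.steps (i - 1)) (r.steps i) (r.nodes i) :=
  Iff.rfl

def support (r : Route G a b) : Set V := {v | ∃ k ≤ r.n, r.nodes k = v}

theorem nodes_mem_support (r : Route G a b) {k : ℕ} (hk : k ≤ r.n) : r.nodes k ∈ r.support :=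
  ⟨k, hk, rfl⟩

def IsPathOutside (r : Route G a b) (X : Set V) : Prop :=
  ∀ i j, i ≤ r.n → j ≤ r.n → r.nodes i = r.nodes j → r.nodes i ∉ X → i = j

theorem isPathOutside_empty (r : Route G a b) : r.IsPathOutside ∅ ↔ r.IsPath := by
  simp [IsPathOutside, IsPath]

theorem isPathOutside_of_interior_subset {r : Route G a b} {X : Set V}
    (hint : ∀ k, 0 < k → k < r.n → r.nodes k ∈ X) (hab : a ≠ b) : r.IsPathOutside X := by
  have hend : ∀ k ≤ r.n, r.nodes k ∉ X → k = 0 ∨ k = r.n := fun k hk hX => by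
    by_contra h
    exact hX (hint k (by omega) (by omega))
  intro i j hi hj heq hX
  rcases hend i hi hX with rfl | rfl <;> rcases hend j hj (heq ▸ hX) with rfl | rfl
  all_goals first
    | rfl
    | exact absurd (r.first.symm.trans (heq.trans r.last)) hab
    | exact absurd (r.first.symm.trans (heq.symm.trans r.last)) hab

theorem eq_or_eq_of_interior_subset {r : Route G a b} {X : Set V}
    (hint : ∀ k, 0 < k → k < r.n → r.nodes k ∈ X) {v : V} (hv : v ∈ r.support) (hX : v ∉ X) :
    v = a ∨ v = b := by
  obtain ⟨k, hk, rfl⟩ := hv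
  rcases Nat.eq_zero_or_pos k with rfl | h0
  · exact Or.inl r.first
  rcases hk.lt_or_eq with hk | rfl
  · exact absurd (hint k h0 hk) hX
  · exact Or.inr r.last

def single (s : Step) (h : StepValid G a s b) : Route G a b where
  n := 1
  npos := Nat.one_pos
  nodes k := if k = 0 then a else b
  steps _ := s
  first := if_pos rfl
  last := if_neg one_ne_zero
  valid i hi := by
    obtain rfl : i = 0 := by omega
    simpa using h

theorem single_pathConnecting {s : Step} (h : StepValid G a s b) (Z : Set V) :
    (single s h).PathConnecting Z :=
  fun i h0 h1 => absurd h1 (by simp only [single]; omega)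

theorem single_isPath {s : Step} (h : StepValid G a s b) (hab : a ≠ b) : (single s h).IsPath :=
  (isPathOutside_empty _).mp
    (isPathOutside_of_interior_subset (fun k h0 hk => absurd hk (by simp only [single]; omega)) hab)

theorem eq_or_eq_of_mem_support_single {s : Step} {h : StepValid G a s b} {v : V}
    (hv : v ∈ (single s h).support) : v = a ∨ v = b := by
  obtain ⟨k, -, rfl⟩ := hv
  by_cases hk : k = 0 <;> simp [single, hk]

def append (r₁ : Route G a b) (r₂ : Route G b c) : Route G a c where
  n := r₁.n + r₂.n
  npos := by have := r₁.npos; omega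
  nodes k := if k ≤ r₁.n then r₁.nodes k else r₂.nodes (k - r₁.n)
  steps k := if k < r₁.n then r₁.steps k else r₂.steps (k - r₁.n)
  first := by simp [r₁.first]
  last := by
    have := r₂.npos
    simp only [Nat.add_sub_cancel_left, r₂.last, ite_eq_right_iff]
    omega
  valid i hi := by
    rcases Nat.lt_or_ge i r₁.n with h | h
    · simpa [h, h.le, Nat.succ_le_of_lt h] using r₁.valid i h
    · have hv := r₂.valid (i - r₁.n) (by omega)
      rw [show i - r₁.n + 1 = i + 1 - r₁.n by omega] at hv
      have hi : (if i ≤ r₁.n then r₁.nodes i else r₂.nodes (i - r₁.n)) = r₂.nodes (i - r₁.n) := by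
        split_ifs with h'
        · rw [show i = r₁.n by omega, r₁.last, Nat.sub_self, r₂.first]
        · rfl
      simpa [hi, show ¬ i < r₁.n by omega, show ¬ i + 1 ≤ r₁.n by omega] using hv

section Append

variable {r₁ : Route G a b} {r₂ : Route G b c} {k : ℕ}

@[simp] theorem append_n : (r₁.append r₂).n = r₁.n + r₂.n := rfl

theorem append_nodes_of_le (hk : k ≤ r₁.n) : (r₁.append r₂).nodes k = r₁.nodes k := if_pos hk

theorem append_nodes_of_ge (hk : r₁.n ≤ k) : (r₁.append r₂).nodes k = r₂.nodes (k - r₁.n) := by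
  show (if k ≤ r₁.n then _ else _) = _
  split_ifs with h
  · rw [show k = r₁.n by omega, r₁.last, Nat.sub_self, r₂.first]
  · rfl

theorem append_steps_of_lt (hk : k < r₁.n) : (r₁.append r₂).steps k = r₁.steps k := if_pos hk

theorem append_steps_of_ge (hk : r₁.n ≤ k) : (r₁.append r₂).steps k = r₂.steps (k - r₁.n) :=
  if_neg (by omega)

theorem support_append_subset : (r₁.append r₂).support ⊆ r₁.support ∪ r₂.support := by
  rintro v ⟨k, hk, rfl⟩
  rcases le_total k r₁.n with h | h
  · exact Or.inl (append_nodes_of_le h ▸ r₁.nodes_mem_support h)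
  · exact Or.inr (append_nodes_of_ge h ▸ r₂.nodes_mem_support (by simp at hk; omega))

theorem PathConnecting.append {Z : Set V} (h₁ : r₁.PathConnecting Z) (h₂ : r₂.PathConnecting Z)
    (hb : Unblocked G Z (r₁.steps (r₁.n - 1)) (r₂.steps 0) b) :
    (r₁.append r₂).PathConnecting Z := by
  rw [pathConnecting_iff] at *
  intro i h0 hi
  have := r₁.npos
  rcases lt_trichotomy i r₁.n with h | rfl | h
  · rw [append_steps_of_lt (by omega), append_steps_of_lt h, append_nodes_of_le h.le]
    exact h₁ i h0 h
  · rw [append_steps_of_lt (by omega), append_steps_of_ge le_rfl, append_nodes_of_le le_rfl,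
      Nat.sub_self, r₁.last]
    exact hb
  · rw [append_steps_of_ge (by omega), append_steps_of_ge h.le, append_nodes_of_ge h.le,
      show i - 1 - r₁.n = i - r₁.n - 1 by omega]
    exact h₂ (i - r₁.n) (by omega) (by simp at hi; omega)

theorem IsPathOutside.append {X : Set V} (h₁ : r₁.IsPathOutside X) (h₂ : r₂.IsPathOutside X)
    (hcross : ∀ v ∈ r₁.support, v ∈ r₂.support → v ∉ X → v = b) :
    (r₁.append r₂).IsPathOutside X := by
  have cross : ∀ i j, i ≤ r₁.n → r₁.n ≤ j → j ≤ r₁.n + r₂.n →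
      (r₁.append r₂).nodes i = (r₁.append r₂).nodes j → (r₁.append r₂).nodes i ∉ X → i = j := by
    intro i j hi hj hjn heq hX
    rw [append_nodes_of_le hi] at heq hX
    rw [append_nodes_of_ge hj] at heq
    have hv := hcross _ (r₁.nodes_mem_support hi) (heq ▸ r₂.nodes_mem_support (by omega)) hX
    have := h₁ i r₁.n hi le_rfl (hv.trans r₁.last.symm) hX
    have := h₂ (j - r₁.n) 0 (by omega) (by omega) (heq.symm.trans (hv.trans r₂.first.symm))
      (heq ▸ hX)
    omega
  intro i j hi hj heq hX
  simp only [append_n] at hi hj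
  rcases le_total i r₁.n with hi₁ | hi₁ <;> rcases le_total j r₁.n with hj₁ | hj₁
  · rw [append_nodes_of_le hi₁, append_nodes_of_le hj₁] at heq
    rw [append_nodes_of_le hi₁] at hX
    exact h₁ i j hi₁ hj₁ heq hX
  · exact cross i j hi₁ hj₁ hj heq hX
  · exact (cross j i hj₁ hi₁ hi heq.symm (heq ▸ hX)).symm
  · rw [append_nodes_of_ge hi₁, append_nodes_of_ge hj₁] at heq
    rw [append_nodes_of_ge hi₁] at hX
    have := h₂ (i - r₁.n) (j - r₁.n) (by omega) (by omega) heq hX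
    omega

end Append

def take (r : Route G a c) (k : ℕ) (hk₀ : 0 < k) (hk : k ≤ r.n) (hb : r.nodes k = b) :
    Route G a b where
  n := k
  npos := hk₀
  nodes := r.nodes
  steps := r.steps
  first := r.first
  last := hb
  valid i hi := r.valid i (by omega)

def drop (r : Route G a c) (k : ℕ) (hk : k < r.n) (hb : r.nodes k = b) : Route G b c where
  n := r.n - k
  npos := Nat.sub_pos_of_lt hk
  nodes i := r.nodes (k + i)
  steps i := r.steps (k + i)
  first := hb
  last := by simpa [Nat.add_sub_cancel' hk.le] using r.last
  valid i hi := by simpa [Nat.add_assoc] using r.valid (k + i) (by omega)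

section TakeDrop

variable {r : Route G a c} {k : ℕ}

theorem PathConnecting.take {Z : Set V} (h : r.PathConnecting Z) {hk₀ : 0 < k} {hk : k ≤ r.n}
    {hb : r.nodes k = b} : (r.take k hk₀ hk hb).PathConnecting Z :=
  fun i h0 hi => h i h0 (by simp only [Route.take] at hi; omega)

theorem PathConnecting.drop {Z : Set V} (h : r.PathConnecting Z) {hk : k < r.n}
    {hb : r.nodes k = b} : (r.drop k hk hb).PathConnecting Z := by
  rw [pathConnecting_iff] at *
  intro i h0 hi
  simp only [Route.drop] at hi ⊢
  rw [show k + (i - 1) = k + i - 1 by omega]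
  exact h (k + i) (by omega) (by omega)

theorem IsPathOutside.take {X : Set V} (h : r.IsPathOutside X) {hk₀ : 0 < k} {hk : k ≤ r.n}
    {hb : r.nodes k = b} : (r.take k hk₀ hk hb).IsPathOutside X :=
  fun i j hi hj =>
    h i j (by simp only [Route.take] at hi; omega) (by simp only [Route.take] at hj; omega)

theorem IsPathOutside.drop {X : Set V} (h : r.IsPathOutside X) {hk : k < r.n}
    {hb : r.nodes k = b} : (r.drop k hk hb).IsPathOutside X := by
  intro i j hi hj heq hX
  simp only [Route.drop] at hi hj heq hX
  have := h (k + i) (k + j) (by omega) (by omega) heq hX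
  omega

theorem IsPath.drop (h : r.IsPath) {hk : k < r.n} {hb : r.nodes k = b} :
    (r.drop k hk hb).IsPath :=
  (isPathOutside_empty _).mp (((isPathOutside_empty r).mpr h).drop)

theorem support_drop_subset {hk : k < r.n} {hb : r.nodes k = b} :
    (r.drop k hk hb).support ⊆ r.support := by
  rintro v ⟨i, hi, rfl⟩
  exact r.nodes_mem_support (by simp only [Route.drop] at hi; omega)

end TakeDrop

end Route

section Intervention

open Relation

variable {G : MixedGraph V} {X W : Set V}

theorem eq_un_of_stepValid_dropDirAt (hnb : G.NoBidirected) {u v : V} {s : Step}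
    (h : StepValid (G.dropDirAt X) u s v) (huv : u ∈ X ∨ v ∈ X) : s = Step.un := by
  cases s with
  | fwd => exact absurd huv (by rintro (hu | hv); exacts [h.2.1 hu, h.2.2 hv])
  | bwd => exact absurd huv (by rintro (hu | hv); exacts [h.2.2 hu, h.2.1 hv])
  | bi => exact absurd h (hnb u v)
  | un => rfl

theorem Route.dropDirAt_steps_eq_un {y z : V} (hnb : G.NoBidirected) (r : Route (G.dropDirAt X) y z)
    {k : ℕ} (h0 : 0 < k) (hk : k < r.n) (hX : r.nodes k ∈ X) :
    r.steps (k - 1) = Step.un ∧ r.steps k = Step.un := by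
  refine ⟨eq_un_of_stepValid_dropDirAt hnb (r.valid (k - 1) (by omega)) (Or.inr ?_),
    eq_un_of_stepValid_dropDirAt hnb (r.valid k hk) (Or.inl hX)⟩
  rwa [Nat.sub_add_cancel h0]

theorem Route.pathConnecting_of_interior_subset {y z : V} (hnb : G.NoBidirected)
    (hXW : Disjoint X W) (r : Route (G.dropDirAt X) y z)
    (hint : ∀ k, 0 < k → k < r.n → r.nodes k ∈ X) : r.PathConnecting W := by
  refine (r.pathConnecting_iff W).mpr fun k h0 hk => ?_
  obtain ⟨h₁, h₂⟩ := r.dropDirAt_steps_eq_un hnb h0 hk (hint k h0 hk)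
  rw [h₁, h₂]
  exact unblocked_un_un (Set.disjoint_left.mp hXW (hint k h0 hk))

theorem Route.reflTransGen_nodes_of_interior_subset {y z : V} (hnb : G.NoBidirected)
    (r : Route (G.dropDirAt X) y z) (hint : ∀ k, 0 < k → k < r.n → r.nodes k ∈ X) {k : ℕ}
    (hk₁ : 1 ≤ k) (hk : k < r.n) :
    ReflTransGen (fun u v => u ∈ X ∧ v ∈ X ∧ G.undir u v) (r.nodes 1) (r.nodes k) := by
  induction k, hk₁ using Nat.le_induction with
  | base => exact ReflTransGen.refl
  | succ k hk₁ ih =>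
    have hv := r.valid k (by omega)
    rw [eq_un_of_stepValid_dropDirAt hnb hv (Or.inl (hint k (by omega) (by omega)))] at hv
    exact (ih (by omega)).tail ⟨hint k (by omega) (by omega), hint (k + 1) (by omega) hk, hv⟩

/-- A single edge survives; a longer route is undirected and becomes a shortcut. -/
theorem stepValid_intervene_of_route {y z : V} (hnb : G.NoBidirected)
    (r : Route (G.dropDirAt X) y z) (hy : y ∉ X) (hz : z ∉ X)
    (hint : ∀ k, 0 < k → k < r.n → r.nodes k ∈ X) :
    StepValid (G.intervene X) y (r.steps 0) z ∧ r.steps (r.n - 1) = r.steps 0 := by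
  rcases Nat.lt_or_ge 1 r.n with h1 | h1
  · have hs₀ := eq_un_of_stepValid_dropDirAt hnb (r.valid 0 r.npos) (Or.inr (hint 1 one_pos h1))
    have hsₙ := (r.dropDirAt_steps_eq_un hnb (by omega) (by omega)
      (hint (r.n - 1) (by omega) (by omega))).2
    refine ⟨?_, hsₙ.trans hs₀.symm⟩
    have hyc := r.valid 0 r.npos
    have hdz := r.valid (r.n - 1) (by omega)
    rw [hs₀, r.first] at hyc
    rw [hsₙ, Nat.sub_add_cancel r.npos, r.last] at hdz
    rw [hs₀]
    exact ⟨hy, hz, Or.inr ⟨_, _, hint 1 one_pos h1, hint (r.n - 1) (by omega) (by omega), hyc, hdz,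
      r.reflTransGen_nodes_of_interior_subset hnb hint (by omega) (by omega)⟩⟩
  · have hn : r.n = 1 := by have := r.npos; omega
    have h := r.valid 0 r.npos
    rw [r.first, show 0 + 1 = r.n by omega, r.last] at h
    refine ⟨?_, by rw [hn]⟩
    cases hs : r.steps 0 <;> rw [hs] at h
    · exact ⟨h.1, hz⟩
    · exact ⟨h.1, hy⟩
    · exact absurd h (hnb y z)
    · exact ⟨hy, hz, Or.inl h⟩

theorem exists_undir_route_of_reflTransGen {u d v : V}
    (hud : ReflTransGen (fun u v => G.undir u v ∧ v ∈ X) u d) (hdv : G.undir d v) :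
    ∃ r : Route (G.dropDirAt X) u v,
      (∀ k < r.n, r.steps k = Step.un) ∧ ∀ k, 0 < k → k < r.n → r.nodes k ∈ X := by
  induction hud using ReflTransGen.head_induction_on with
  | refl => exact ⟨Route.single Step.un hdv, fun _ _ => rfl,
      fun k h0 hk => absurd hk (by simp only [Route.single]; omega)⟩
  | head huu' _ ih =>
    obtain ⟨r, hs, hX⟩ := ih
    refine ⟨(Route.single (G := G.dropDirAt X) Step.un huu'.1).append r, fun k hk => ?_,
      fun k h0 hk => ?_⟩
    · rcases Nat.lt_or_ge k 1 with h | h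
      · rw [Route.append_steps_of_lt h]; rfl
      · rw [Route.append_steps_of_ge h]
        exact hs _ (by simp only [Route.append_n, Route.single] at hk ⊢; omega)
    · rw [Route.append_nodes_of_ge h0]
      show r.nodes (k - 1) ∈ X
      rcases Nat.eq_zero_or_pos (k - 1) with h | h
      · rw [h, r.first]
        exact huu'.2
      · exact hX _ h (by simp only [Route.append_n, Route.single] at hk ⊢; omega)

theorem exists_route_of_stepValid_intervene {y z : V} (hnb : G.NoBidirected) {s : Step}
    (hy : y ∉ X) (hz : z ∉ X) (h : StepValid (G.intervene X) y s z) :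
    ∃ r : Route (G.dropDirAt X) y z,
      (∀ k < r.n, r.steps k = s) ∧ ∀ k, 0 < k → k < r.n → r.nodes k ∈ X := by
  have of_edge : StepValid (G.dropDirAt X) y s z → ∃ r : Route (G.dropDirAt X) y z,
      (∀ k < r.n, r.steps k = s) ∧ ∀ k, 0 < k → k < r.n → r.nodes k ∈ X := fun h' =>
    ⟨Route.single s h', fun _ _ => rfl, fun k h0 hk => absurd hk (by simp [Route.single]; omega)⟩
  cases s with
  | fwd => exact of_edge ⟨h.1, hy, hz⟩
  | bwd => exact of_edge ⟨h.1, hz, hy⟩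
  | bi => exact absurd h.1 (hnb y z)
  | un =>
    obtain ⟨-, -, h | ⟨c, d, hc, -, hyc, hdz, hcd⟩⟩ := h
    · exact of_edge h
    exact exists_undir_route_of_reflTransGen
      (.head ⟨hyc, hc⟩ (ReflTransGen.mono (fun _ _ h => ⟨h.2.2, h.2.1⟩) _ _ hcd)) hdz

/-- A node of `X` has only outgoing edges in `G.intervene X`, so a route passes it as a fork,
which conditioning on `X` blocks. -/
theorem Route.nodes_not_mem_of_intervene {y z : V} (hnb : G.NoBidirected)
    (r : Route (G.intervene X) y z)
    (hy : y ∉ X) (hz : z ∉ X) (hc : r.PathConnecting (X ∪ W)) : ∀ k ≤ r.n, r.nodes k ∉ X := by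
  intro k hk hX
  rcases Nat.eq_zero_or_pos k with rfl | h0
  · exact hy (r.first ▸ hX)
  rcases hk.lt_or_eq with hk | rfl
  swap
  · exact hz (r.last ▸ hX)
  have hl := r.valid (k - 1) (by omega)
  rw [Nat.sub_add_cancel h0] at hl
  have hr := r.valid k hk
  have hsl : r.steps (k - 1) = Step.bwd := by
    cases hs : r.steps (k - 1) <;> rw [hs] at hl
    exacts [absurd hX hl.2, absurd hl.1 (hnb _ _), absurd hX hl.2.1]
  have hsr : r.steps k = Step.fwd := by
    cases hs : r.steps k <;> rw [hs] at hr
    exacts [absurd hX hr.2, absurd hr.1 (hnb _ _), absurd hX hr.1]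
  have hu := ((r.pathConnecting_iff _).mp hc k h0 hk).2
  rw [hsl, hsr] at hu
  rcases hu (by simp [IsColliderAt, headInto, headOut]) with h | ⟨h, -⟩
  · exact h (Or.inl hX)
  · exact Step.noConfusion h

theorem anc_intervene_of_dropDirAt {v : V} (h : Anc (G.dropDirAt X) W v) :
    Anc (G.intervene X) (X ∪ W) v := by
  obtain ⟨t, ht, hvt⟩ := h
  exact ⟨t, Or.inr ht, ReflTransGen.mono (fun _ _ hab => ⟨hab.1, hab.2.2⟩) _ _ hvt⟩

/-- Directed edges of `G.intervene X` end outside `X`, so a directed route starting outside `X`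
never enters `X`. -/
theorem anc_dropDirAt_of_intervene {v : V} (hv : v ∉ X) (h : Anc (G.intervene X) (X ∪ W) v) :
    Anc (G.dropDirAt X) W v := by
  obtain ⟨t, ht, hvt⟩ := h
  have key : ∀ {u}, ReflTransGen (G.intervene X).dir u t → u ∉ X →
      ReflTransGen (G.dropDirAt X).dir u t ∧ t ∉ X := by
    intro u hut
    induction hut using ReflTransGen.head_induction_on with
    | refl => exact fun hu => ⟨ReflTransGen.refl, hu⟩
    | head hab _ ih =>
      intro hu
      obtain ⟨hrest, htX⟩ := ih hab.2
      exact ⟨ReflTransGen.head ⟨hab.1, hu, hab.2⟩ hrest, htX⟩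
  obtain ⟨hvt', htX⟩ := key hvt hv
  exact ⟨t, ht.resolve_left htX, hvt'⟩

theorem Unblocked.intervene_of_dropDirAt (hnb : G.NoBidirected) {sl sr : Step} {v : V}
    (hv : v ∉ X) (h : Unblocked (G.dropDirAt X) W sl sr v) :
    Unblocked (G.intervene X) (X ∪ W) sl sr v := by
  refine ⟨fun hc => anc_intervene_of_dropDirAt (h.1 hc), fun hc => ?_⟩
  rcases h.2 hc with hW | ⟨hl, hr, ⟨p, hp, hpW⟩ | ⟨s, hs⟩⟩
  · exact Or.inl (by simp [hv, hW])
  · exact Or.inr ⟨hl, hr, Or.inl ⟨p, ⟨hp.1, hv⟩, by simp [hp.2.1, hpW]⟩⟩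
  · exact absurd hs (hnb s v)

theorem Unblocked.dropDirAt_of_intervene (hnb : G.NoBidirected) {sl sr : Step} {v : V}
    (hv : v ∉ X) (h : Unblocked (G.intervene X) (X ∪ W) sl sr v) :
    Unblocked (G.dropDirAt X) W sl sr v := by
  refine ⟨fun hc => anc_dropDirAt_of_intervene hv (h.1 hc), fun hc => ?_⟩
  rcases h.2 hc with hXW | ⟨hl, hr, ⟨p, hp, hpXW⟩ | ⟨s, hs⟩⟩
  · exact Or.inl fun hW => hXW (Or.inr hW)
  · exact Or.inr ⟨hl, hr, Or.inl ⟨p, ⟨hp.1, fun hpX => hpXW (Or.inl hpX), hv⟩,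
      fun hpW => hpXW (Or.inr hpW)⟩⟩
  · exact absurd hs.1 (hnb s v)

theorem exists_dropDirAt_route_of_intervene {y z : V} (hnb : G.NoBidirected) (hXW : Disjoint X W)
    (r : Route (G.intervene X) y z) (hp : r.IsPath) (hX : ∀ k ≤ r.n, r.nodes k ∉ X)
    (hc : r.PathConnecting (X ∪ W)) :
    ∃ ρ : Route (G.dropDirAt X) y z, ρ.steps 0 = r.steps 0 ∧ ρ.PathConnecting W ∧
      ρ.IsPathOutside X ∧ ∀ v ∈ ρ.support, v ∉ X → v ∈ r.support := by
  have hy : y ∉ X := r.first ▸ hX 0 (Nat.zero_le _)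
  have hy_supp : y ∈ r.support := ⟨0, Nat.zero_le _, r.first⟩
  rcases Nat.lt_or_ge 1 r.n with h1 | h1
  · have h1X : r.nodes 1 ∉ X := hX 1 h1.le
    obtain ⟨ρ₁, hs₁, hint₁⟩ :=
      exists_route_of_stepValid_intervene hnb hy h1X (r.first ▸ r.valid 0 r.npos)
    obtain ⟨ρ₂, hs₂, hc₂, ho₂, hsupp₂⟩ := exists_dropDirAt_route_of_intervene hnb hXW
      (r.drop 1 h1 rfl) hp.drop (fun k hk => hX (1 + k) (by simp only [Route.drop] at hk; omega))
      hc.drop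
    have hy₂ : y ∉ ρ₂.support := fun hyρ => by
      obtain ⟨k, hk, hyk⟩ := hsupp₂ y hyρ hy
      have := hp (1 + k) 0 (by simp only [Route.drop] at hk; omega) (Nat.zero_le _)
        (hyk.trans r.first.symm)
      omega
    have hy1 : y ≠ r.nodes 1 := fun h => by
      have := hp 0 1 (Nat.zero_le _) h1.le (r.first.trans h)
      omega
    refine ⟨ρ₁.append ρ₂, ?_, ?_, ?_, ?_⟩
    · rw [Route.append_steps_of_lt ρ₁.npos]
      exact hs₁ 0 ρ₁.npos
    · refine (ρ₁.pathConnecting_of_interior_subset hnb hXW hint₁).append hc₂ ?_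
      rw [hs₁ _ (by have := ρ₁.npos; omega), hs₂]
      exact ((r.pathConnecting_iff _).mp hc 1 one_pos h1).dropDirAt_of_intervene hnb h1X
    · refine (Route.isPathOutside_of_interior_subset hint₁ hy1).append ho₂
        fun v hv₁ hv₂ hvX => ?_
      rcases Route.eq_or_eq_of_interior_subset hint₁ hv₁ hvX with rfl | rfl
      exacts [absurd hv₂ hy₂, rfl]
    · intro v hv hvX
      rcases Route.support_append_subset hv with hv | hv
      · rcases Route.eq_or_eq_of_interior_subset hint₁ hv hvX with rfl | rfl
        exacts [hy_supp, r.nodes_mem_support h1.le]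
      · exact Route.support_drop_subset (hsupp₂ v hv hvX)
  · have hz : z ∉ X := r.last ▸ hX r.n le_rfl
    have hyz : y ≠ z := fun h => by
      have := hp 0 r.n (Nat.zero_le _) le_rfl (r.first.trans (h.trans r.last.symm))
      have := r.npos
      omega
    have he := r.valid 0 r.npos
    rw [r.first, show 0 + 1 = r.n by have := r.npos; omega, r.last] at he
    obtain ⟨ρ, hs, hint⟩ := exists_route_of_stepValid_intervene hnb hy hz he
    refine ⟨ρ, hs 0 ρ.npos, ρ.pathConnecting_of_interior_subset hnb hXW hint,
      Route.isPathOutside_of_interior_subset hint hyz, fun v hv hvX => ?_⟩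
    rcases Route.eq_or_eq_of_interior_subset hint hv hvX with rfl | rfl
    exacts [hy_supp, ⟨r.n, le_rfl, r.last⟩]
termination_by r.n
decreasing_by simp only [Route.drop]; omega

/-- At a repeated node of a walk of `G.dropDirAt X` that lies in `X`, both adjacent steps are
undirected and the node is outside `W`, so cutting out the loop keeps the walk open. -/
theorem exists_path_of_isPathOutside {y z : V} (hnb : G.NoBidirected) (hXW : Disjoint X W)
    (r : Route (G.dropDirAt X) y z) (hy : y ∉ X) (hz : z ∉ X) (hc : r.PathConnecting W)
    (ho : r.IsPathOutside X) : ∃ ρ : Route (G.dropDirAt X) y z, ρ.IsPath ∧ ρ.PathConnecting W := by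
  by_cases hp : r.IsPath
  · exact ⟨r, hp, hc⟩
  obtain ⟨i, j, hij, hj, heq⟩ : ∃ i j, i < j ∧ j ≤ r.n ∧ r.nodes i = r.nodes j := by
    simp only [Route.IsPath, not_forall] at hp
    obtain ⟨i, j, hi, hj, heq, hne⟩ := hp
    rcases Nat.lt_or_gt_of_ne hne with h | h
    exacts [⟨i, j, h, hj, heq⟩, ⟨j, i, h, hi, heq.symm⟩]
  have hX : r.nodes j ∈ X := by_contra fun h => hij.ne (ho i j (by omega) hj heq (heq ▸ h))
  have hi₀ : 0 < i := Nat.pos_of_ne_zero fun h => hy (by rw [← r.first, ← h, heq]; exact hX)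
  have hjn : j < r.n := lt_of_le_of_ne hj fun h => hz (by rw [← r.last, ← h]; exact hX)
  refine exists_path_of_isPathOutside hnb hXW
    ((r.take i hi₀ (by omega) heq).append (r.drop j hjn rfl)) hy hz
    (hc.take.append hc.drop ?_) (ho.take.append ho.drop ?_)
  · have h₁ := (r.dropDirAt_steps_eq_un hnb hi₀ (by omega) (heq ▸ hX)).1
    have h₂ := (r.dropDirAt_steps_eq_un hnb (by omega) hjn hX).2
    show Unblocked _ W (r.steps (i - 1)) (r.steps (j + 0)) (r.nodes j)
    rw [h₁, Nat.add_zero, h₂]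
    exact unblocked_un_un (Set.disjoint_left.mp hXW hX)
  · rintro v ⟨k₁, hk₁, rfl⟩ ⟨k₂, hk₂, hv⟩ hvX
    simp only [Route.take, Route.drop] at hk₁ hk₂ hv hvX
    have := ho k₁ (j + k₂) (by omega) (by omega) hv.symm hvX
    omega
termination_by r.n
decreasing_by simp only [Route.append, Route.take, Route.drop]; omega

theorem exists_intervene_path_of_dropDirAt {y z : V} (hnb : G.NoBidirected)
    (r : Route (G.dropDirAt X) y z) (hp : r.IsPath) (hy : y ∉ X) (hz : z ∉ X)
    (hc : r.PathConnecting W) :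
    ∃ ρ : Route (G.intervene X) y z, ρ.steps 0 = r.steps 0 ∧ ρ.IsPath ∧
      ρ.PathConnecting (X ∪ W) ∧ ρ.support ⊆ r.support := by
  have hzX : r.nodes r.n ∉ X := by rwa [r.last]
  have hex : ∃ m, 0 < m ∧ r.nodes m ∉ X := ⟨r.n, r.npos, hzX⟩
  obtain ⟨hm₀, hmX⟩ := Nat.find_spec hex
  have hmn : Nat.find hex ≤ r.n := Nat.find_min' hex ⟨r.npos, hzX⟩
  have hint : ∀ k, 0 < k → k < Nat.find hex → r.nodes k ∈ X :=
    fun k h0 hk => not_not.mp fun h => Nat.find_min hex hk ⟨h0, h⟩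
  set m := Nat.find hex
  have hym : y ≠ r.nodes m := fun h => by
    have := hp 0 m (Nat.zero_le _) hmn (r.first.trans h)
    omega
  have hseg := stepValid_intervene_of_route hnb (r.take m hm₀ hmn rfl) hy hmX hint
  have he : StepValid (G.intervene X) y (r.steps 0) (r.nodes m) := hseg.1
  have hlast : r.steps (m - 1) = r.steps 0 := hseg.2
  rcases hmn.lt_or_eq with hmn | hmn
  · obtain ⟨ρ, hs, hpρ, hcρ, hsupp⟩ :=
      exists_intervene_path_of_dropDirAt hnb (r.drop m hmn rfl) hp.drop hmX hz hc.drop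
    have hyρ : y ∉ ρ.support := fun hyρ => by
      obtain ⟨k, hk, hyk⟩ := hsupp hyρ
      have := hp (m + k) 0 (by simp only [Route.drop] at hk; omega) (Nat.zero_le _)
        (hyk.trans r.first.symm)
      omega
    refine ⟨(Route.single _ he).append ρ, rfl, ?_, ?_, ?_⟩
    · refine (Route.isPathOutside_empty _).mp <|
        ((Route.isPathOutside_empty _).mpr (Route.single_isPath he hym)).append
          ((Route.isPathOutside_empty _).mpr hpρ) fun v hv₁ hv₂ _ => ?_
      rcases Route.eq_or_eq_of_mem_support_single hv₁ with rfl | rfl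
      exacts [absurd hv₂ hyρ, rfl]
    · refine (Route.single_pathConnecting he _).append hcρ ?_
      have hu := (r.pathConnecting_iff W).mp hc m hm₀ hmn
      rw [hlast] at hu
      rw [hs]
      exact hu.intervene_of_dropDirAt hnb hmX
    · intro v hv
      rcases Route.support_append_subset hv with hv | hv
      · rcases Route.eq_or_eq_of_mem_support_single hv with rfl | rfl
        exacts [⟨0, Nat.zero_le _, r.first⟩, r.nodes_mem_support hmn.le]
      · exact Route.support_drop_subset (hsupp hv)
  · rw [hmn, r.last] at he hym
    refine ⟨Route.single _ he, rfl, Route.single_isPath he hym, Route.single_pathConnecting he _,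
      fun v hv => ?_⟩
    rcases Route.eq_or_eq_of_mem_support_single hv with rfl | rfl
    exacts [⟨0, Nat.zero_le _, r.first⟩, ⟨r.n, le_rfl, r.last⟩]
termination_by r.n
decreasing_by simp only [Route.drop]; omega

end Intervention

end MixedGraph

open MixedGraph in
theorem rule1_antecedent_equivalence_general
    {V : Type*} (G : MixedGraph V)
    (hnb : G.NoBidirected) (X Y Z W : Set V)
    (hXY : Disjoint X Y) (hXZ : Disjoint X Z) (hXW : Disjoint X W) :
    Separated (intervene G X) Y Z (X ∪ W) ↔ Separated (dropDirAt G X) Y Z W := by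
  constructor
  · rintro hsep y hy z hz ⟨r, hp, hc⟩
    obtain ⟨ρ, -, hρp, hρc, -⟩ := exists_intervene_path_of_dropDirAt hnb r hp
      (Set.disjoint_right.mp hXY hy) (Set.disjoint_right.mp hXZ hz) hc
    exact hsep y hy z hz ⟨ρ, hρp, hρc⟩
  · rintro hsep y hy z hz ⟨r, hp, hc⟩
    have hyX : y ∉ X := Set.disjoint_right.mp hXY hy
    have hzX : z ∉ X := Set.disjoint_right.mp hXZ hz
    obtain ⟨ρ, -, hρc, hρo, -⟩ := exists_dropDirAt_route_of_intervene hnb hXW r hp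
      (r.nodes_not_mem_of_intervene hnb hyX hzX hc) hc
    obtain ⟨ρ', hρ'p, hρ'c⟩ := exists_path_of_isPathOutside hnb hXW ρ hyX hzX hρc hρo
    exact hsep y hy z hz ⟨ρ', hρ'p, hρ'c⟩

open MixedGraph in
/-- Equivalence of the antecedents of rule 1 of the calculus for aADMGs:
separation of `Y` from `Z` given `X ∪ W` in `G_X̂` is equivalent to separation
of `Y` from `Z` given `W` in `G` with all directed edges into and out of `X`
deleted. -/
theorem rule1_antecedent_equivalence
    {V : Type*} [Fintype V] (G : MixedGraph V) (hG : G.WellFormed)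
    (hnb : G.NoBidirected) (X Y Z W : Set V)
    (hXY : Disjoint X Y) (hXZ : Disjoint X Z) (hXW : Disjoint X W)
    (hYZ : Disjoint Y Z) (hYW : Disjoint Y W) (hZW : Disjoint Z W) :
    Separated (intervene G X) Y Z (X ∪ W) ↔ Separated (dropDirAt G X) Y Z W :=
  rule1_antecedent_equivalence_general G hnb X Y Z W hXY hXZ hXW
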